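/- Let A be a bounded right linear operator on a quaternionic Hilbert space with polar decomposition A = U₀|A| (N(U₀) = N(A)). If U is any partial isometry with A = U|A|, then U = U₀ + V P where P is the orthogonal projection onto N(A) and V is a partial isometry from N(A) into R(A)^⊥. -/

import Mathlib

noncomputable section

open MulOpposite

local notation "ℍ" => Quaternion ℝ

variable {H : Type*} [NormedAddCommGroup H] [Module ℍᵐᵒᵖ H]

/-- The axioms of a quaternion-valued inner product compatible with the norm on a
right quaternionic module `H` (scalars act on the right via `ℍᵐᵒᵖ`). -/
structure QInner (inn : H → H → ℍ) : Prop where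
  add_right : ∀ u v w : H, inn u (v + w) = inn u v + inn u w
  smul_right : ∀ (u v : H) (q : ℍ), inn u (op q • v) = inn u v * q
  conj_symm : ∀ u v : H, inn u v = star (inn v u)
  norm_sq : ∀ u : H, inn u u = ((‖u‖ ^ 2 : ℝ) : ℍ)

/-- `B` is the adjoint of the bounded right linear operator `A`. -/
def IsAdjB (inn : H → H → ℍ) (A B : H →L[ℍᵐᵒᵖ] H) : Prop :=
  ∀ x y : H, inn (B x) y = inn x (A y)

/-- `A` is a positive bounded operator. -/
def IsPosB (inn : H → H → ℍ) (A : H →L[ℍᵐᵒᵖ] H) : Prop :=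
  IsAdjB inn A A ∧ ∀ x : H, ∃ r : ℝ, 0 ≤ r ∧ inn x (A x) = (r : ℍ)

/-- Orthogonal complement of a set. -/
def qOrth (inn : H → H → ℍ) (S : Set H) : Set H := {x | ∀ y ∈ S, inn y x = 0}

/-- Null space of a bounded operator. -/
def kerB (A : H →L[ℍᵐᵒᵖ] H) : Set H := {x | A x = 0}

/-- `U` is a partial isometry: it is isometric on `N(U)^⊥`. -/
def IsPartialIsomB (inn : H → H → ℍ) (U : H →L[ℍᵐᵒᵖ] H) : Prop :=
  ∀ x ∈ qOrth inn (kerB U), ‖U x‖ = ‖x‖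

/-- Null space of an unbounded operator. -/
def pKer (T : H →ₗ.[ℍᵐᵒᵖ] H) : Set H := {x | ∃ hx : x ∈ T.domain, T ⟨x, hx⟩ = 0}

/-- Range of an unbounded operator. -/
def pRan (T : H →ₗ.[ℍᵐᵒᵖ] H) : Set H := Set.range fun x : T.domain => T x

/-- `S` is the adjoint of the densely defined operator `T` : the formal adjoint
identity holds and the domain of `S` is maximal. -/
def IsAdjP (inn : H → H → ℍ) (T S : H →ₗ.[ℍᵐᵒᵖ] H) : Prop :=
  (∀ (x : S.domain) (y : T.domain), inn (x : H) (T y) = inn (S x) (y : H)) ∧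
  ∀ x z : H, (∀ y : T.domain, inn x (T y) = inn z (y : H)) → x ∈ S.domain

/-- `T` is a positive (self-adjoint) unbounded operator. -/
def IsPosP (inn : H → H → ℍ) (T : H →ₗ.[ℍᵐᵒᵖ] H) : Prop :=
  IsAdjP inn T T ∧ ∀ x : T.domain, ∃ r : ℝ, 0 ≤ r ∧ inn (x : H) (T x) = (r : ℍ)

/-- `C = S ∘ T` as unbounded operators, with the usual maximal domain. -/
def IsCompP (S T C : H →ₗ.[ℍᵐᵒᵖ] H) : Prop :=
  (∀ x : H, x ∈ C.domain ↔ ∃ hx : x ∈ T.domain, T ⟨x, hx⟩ ∈ S.domain) ∧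
  ∀ (x : C.domain) (hx : (x : H) ∈ T.domain) (h2 : T ⟨x, hx⟩ ∈ S.domain),
    C x = S ⟨T ⟨x, hx⟩, h2⟩

/-- `T = U ∘ P` where `U` is bounded and `T`, `P` are unbounded. -/
def EqCompB (T : H →ₗ.[ℍᵐᵒᵖ] H) (U : H →L[ℍᵐᵒᵖ] H) (P : H →ₗ.[ℍᵐᵒᵖ] H) : Prop :=
  T.domain = P.domain ∧
  ∀ (x : H) (hx : x ∈ T.domain) (hx' : x ∈ P.domain), T ⟨x, hx⟩ = U (P ⟨x, hx'⟩)

/-- The bounded operator `B` commutes with the unbounded operator `T`, i.e. `TB ⊆ BT`. -/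
def CommP (B : H →L[ℍᵐᵒᵖ] H) (T : H →ₗ.[ℍᵐᵒᵖ] H) : Prop :=
  ∀ x : T.domain, ∃ h : B (x : H) ∈ T.domain, T ⟨B (x : H), h⟩ = B (T x)

/-!
Taking real parts of `inn` makes `H` a real Hilbert space, which supplies the projection theorem
for closed quaternionic subspaces. Since `‖A x‖ = ‖|A| x‖`, we get `N(A) = N(|A|) = R(|A|)^⊥`, so
`N(P) = N(A)^⊥` is the closure of `R(|A|)`, where `U` and `U₀` agree; hence `U = U₀ + (U - U₀) P`.
A partial isometry satisfies `⟨U a, U x⟩ = ⟨a, x⟩` for `a ⊥ N(U)`, and `‖U |A| w‖ = ‖|A| w‖`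
forces `R(|A|) ⊥ N(U)`. So `V = U - U₀` agrees with `U` on `N(A)`, sends it orthogonally to
`R(A) = U R(|A|)`, and `N(U) ⊆ N(V)` makes `V` a partial isometry.
-/

theorem Quaternion.eq_of_forall_re_mul_eq {c d : ℍ}
    (h : ∀ q, (c * q).re = (d * q).re) : c = d := by
  have h1 := h (star (c - d))
  rw [← sub_eq_zero, ← Quaternion.re_sub, ← sub_mul, Quaternion.self_mul_star,
    Quaternion.re_coe] at h1
  exact sub_eq_zero.mp (Quaternion.normSq_eq_zero.mp h1)

theorem coe_ker_eq_kerB (T : H →L[ℍᵐᵒᵖ] H) : ((T : H →ₗ[ℍᵐᵒᵖ] H).ker : Set H) = kerB T :=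
  rfl

namespace QInner

variable {inn : H → H → ℍ} (hinn : QInner inn)
include hinn

theorem zero_right (u : H) : inn u 0 = 0 := by
  simpa using hinn.add_right u 0 0

theorem add_left (u v w : H) : inn (u + v) w = inn u w + inn v w := by
  rw [hinn.conj_symm, hinn.add_right, star_add, ← hinn.conj_symm, ← hinn.conj_symm]

theorem smul_left (u v : H) (q : ℍ) : inn (op q • u) v = star q * inn u v := by
  rw [hinn.conj_symm, hinn.smul_right, star_mul, ← hinn.conj_symm]

theorem re_symm (u v : H) : (inn u v).re = (inn v u).re := by
  rw [hinn.conj_symm, Quaternion.re_star]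

theorem re_self (u : H) : (inn u u).re = ‖u‖ ^ 2 := by
  rw [hinn.norm_sq, Quaternion.re_coe]

theorem eq_zero_of_self_eq_zero {u : H} (h : inn u u = 0) : u = 0 := by
  have := hinn.re_self u
  rw [h, Quaternion.re_zero] at this
  exact norm_eq_zero.mp (pow_eq_zero_iff two_ne_zero |>.mp this.symm)

theorem norm_add_sq (u v : H) : ‖u + v‖ ^ 2 = ‖u‖ ^ 2 + 2 * (inn u v).re + ‖v‖ ^ 2 := by
  rw [← hinn.re_self, ← hinn.re_self, ← hinn.re_self, hinn.add_left, hinn.add_right,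
    hinn.add_right]
  simp only [Quaternion.re_add]
  rw [hinn.re_symm v u]
  ring

theorem norm_smul (q : ℍ) (u : H) : ‖op q • u‖ = ‖q‖ * ‖u‖ := by
  have hsq : ‖op q • u‖ ^ 2 = (‖q‖ * ‖u‖) ^ 2 := by
    rw [← hinn.re_self, hinn.smul_left, hinn.smul_right, hinn.norm_sq,
      Quaternion.coe_commutes, ← mul_assoc, Quaternion.star_mul_self, ← Quaternion.coe_mul,
      Quaternion.re_coe, Quaternion.normSq_eq_norm_mul_self]
    ring
  exact (pow_left_inj₀ (norm_nonneg _) (by positivity) two_ne_zero).mp hsq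

abbrev toInnerProductSpace : InnerProductSpace ℝ H where
  toModule := Module.compHom H (algebraMap ℝ ℍᵐᵒᵖ)
  norm_smul_le r x := by
    change ‖op (r : ℍ) • x‖ ≤ ‖r‖ * ‖x‖
    rw [hinn.norm_smul, Quaternion.norm_coe]
  inner u v := (inn u v).re
  norm_sq_eq_re_inner x := (hinn.re_self x).symm
  conj_inner_symm x y := hinn.re_symm y x
  add_left x y z := by
    change (inn (x + y) z).re = (inn x z).re + (inn y z).re
    rw [hinn.add_left, Quaternion.re_add]
  smul_left x y r := by
    change (inn (op (r : ℍ) • x) y).re = r * (inn x y).re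
    rw [hinn.smul_left, Quaternion.star_coe, Quaternion.coe_mul_eq_smul, Quaternion.re_smul,
      smul_eq_mul]

theorem isScalarTower : letI := hinn.toInnerProductSpace; IsScalarTower ℝ ℍᵐᵒᵖ H :=
  letI := hinn.toInnerProductSpace
  IsScalarTower.of_algebraMap_smul fun _ _ => rfl

theorem mem_orthogonal_restrictScalars_iff (S : Submodule ℍᵐᵒᵖ H) (z : H) :
    letI := hinn.toInnerProductSpace
    haveI := hinn.isScalarTower
    z ∈ (S.restrictScalars ℝ)ᗮ ↔ z ∈ qOrth inn S := by
  let := hinn.toInnerProductSpace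
  have := hinn.isScalarTower
  rw [Submodule.mem_orthogonal]
  refine ⟨fun h y hy => ?_, fun h y hy => ?_⟩
  · have hzy : inn z y = 0 := Quaternion.eq_of_forall_re_mul_eq fun q => by
      rw [zero_mul, Quaternion.re_zero, ← hinn.smul_right, hinn.re_symm]
      exact h _ (S.smul_mem (op q) hy)
    rw [hinn.conj_symm, hzy, star_zero]
  · change (inn y z).re = 0
    rw [h y hy, Quaternion.re_zero]

theorem exists_add_mem_qOrth [CompleteSpace H] (S : Submodule ℍᵐᵒᵖ H)
    (hS : IsClosed (S : Set H)) (x : H) : ∃ x₁ ∈ S, ∃ x₂ ∈ qOrth inn S, x = x₁ + x₂ := by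
  let := hinn.toInnerProductSpace
  have := hinn.isScalarTower
  have : CompleteSpace (S.restrictScalars ℝ) := hS.completeSpace_coe
  obtain ⟨x₁, h₁, x₂, h₂, rfl⟩ := (S.restrictScalars ℝ).exists_add_mem_mem_orthogonal x
  exact ⟨x₁, h₁, x₂, (hinn.mem_orthogonal_restrictScalars_iff S x₂).mp h₂, rfl⟩

theorem qOrth_qOrth_subset_closure [CompleteSpace H] (S : Submodule ℍᵐᵒᵖ H) :
    qOrth inn (qOrth inn S) ⊆ closure S := by
  let := hinn.toInnerProductSpace
  have := hinn.isScalarTower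
  intro y hy
  have hy' : y ∈ (S.restrictScalars ℝ)ᗮᗮ := by
    rw [Submodule.mem_orthogonal]
    intro z hz
    change (inn z y).re = 0
    rw [hy z ((hinn.mem_orthogonal_restrictScalars_iff S z).mp hz), Quaternion.re_zero]
  rwa [Submodule.orthogonal_orthogonal_eq_closure, ← SetLike.mem_coe,
    Submodule.topologicalClosure_coe] at hy'

theorem subset_qOrth_symm {S T : Set H} (h : S ⊆ qOrth inn T) : T ⊆ qOrth inn S :=
  fun x hx y hy => by rw [hinn.conj_symm, h hy x hx, star_zero]

theorem add_mem_qOrth {S : Set H} {x y : H} (hx : x ∈ qOrth inn S) (hy : y ∈ qOrth inn S) :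
    x + y ∈ qOrth inn S :=
  fun z hz => by rw [hinn.add_right, hx z hz, hy z hz, add_zero]

theorem smul_mem_qOrth {S : Set H} {x : H} (hx : x ∈ qOrth inn S) (q : ℍ) :
    op q • x ∈ qOrth inn S :=
  fun z hz => by rw [hinn.smul_right, hx z hz, zero_mul]

theorem qOrth_range_eq_kerB {A B : H →L[ℍᵐᵒᵖ] H} (h : IsAdjB inn A B) :
    qOrth inn (Set.range B) = kerB A := by
  ext z
  refine ⟨fun hz => hinn.eq_zero_of_self_eq_zero ?_, ?_⟩
  · rw [← h]
    exact hz _ ⟨_, rfl⟩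
  · rintro (hz : A z = 0) _ ⟨w, rfl⟩
    rw [h, hz, hinn.zero_right]

theorem norm_apply_eq_of_comp_eq {A As M : H →L[ℍᵐᵒᵖ] H} (hA : IsAdjB inn A As)
    (hM : IsAdjB inn M M) (h : M.comp M = As.comp A) (x : H) : ‖A x‖ = ‖M x‖ := by
  have hinner : inn (A x) (A x) = inn (M x) (M x) := by
    rw [← hA, ← hM, ← ContinuousLinearMap.comp_apply, ← ContinuousLinearMap.comp_apply, h]
  rw [hinn.norm_sq, hinn.norm_sq, Quaternion.coe_inj] at hinner
  exact (pow_left_inj₀ (norm_nonneg _) (norm_nonneg _) two_ne_zero).mp hinner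

theorem kerB_eq_qOrth_range_of_comp_eq {A As M : H →L[ℍᵐᵒᵖ] H} (hA : IsAdjB inn A As)
    (hM : IsAdjB inn M M) (h : M.comp M = As.comp A) : kerB A = qOrth inn (Set.range M) := by
  rw [hinn.qOrth_range_eq_kerB hM]
  ext x
  change A x = 0 ↔ M x = 0
  rw [← norm_eq_zero, hinn.norm_apply_eq_of_comp_eq hA hM h, norm_eq_zero]

end QInner

theorem IsPartialIsomB.of_kerB_subset {inn : H → H → ℍ} {U V : H →L[ℍᵐᵒᵖ] H}
    (hU : IsPartialIsomB inn U) (hker : kerB U ⊆ kerB V)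
    (hVU : ∀ x ∈ qOrth inn (kerB V), V x = U x) : IsPartialIsomB inn V :=
  fun x hx => by rw [hVU x hx, hU x fun y hy => hx y (hker hy)]

namespace IsPartialIsomB

variable {inn : H → H → ℍ} (hinn : QInner inn) {U : H →L[ℍᵐᵒᵖ] H} (hU : IsPartialIsomB inn U)
include hinn hU

theorem re_inner_map_map {a b : H} (ha : a ∈ qOrth inn (kerB U)) (hb : b ∈ qOrth inn (kerB U)) :
    (inn (U a) (U b)).re = (inn a b).re := by
  have h := hinn.norm_add_sq (U a) (U b)
  rw [← map_add, hU _ (hinn.add_mem_qOrth ha hb), hU a ha, hU b hb, hinn.norm_add_sq] at h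
  linarith

theorem inner_map_map {a b : H} (ha : a ∈ qOrth inn (kerB U)) (hb : b ∈ qOrth inn (kerB U)) :
    inn (U a) (U b) = inn a b :=
  Quaternion.eq_of_forall_re_mul_eq fun q => by
    rw [← hinn.smul_right, ← hinn.smul_right, ← map_smul]
    exact hU.re_inner_map_map hinn ha (hinn.smul_mem_qOrth hb q)

variable [CompleteSpace H]

theorem mem_qOrth_kerB_of_norm_eq {v : H} (h : ‖U v‖ = ‖v‖) : v ∈ qOrth inn (kerB U) := by
  obtain ⟨v₁, h₁ : U v₁ = 0, v₂, h₂, rfl⟩ := hinn.exists_add_mem_qOrth _ U.isClosed_ker v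
  rw [coe_ker_eq_kerB] at h₂
  rw [map_add, h₁, zero_add, hU v₂ h₂] at h
  have hv₁ : ‖v₁‖ ^ 2 = 0 := by
    have := hinn.norm_add_sq v₁ v₂
    rw [← h, h₂ v₁ h₁, Quaternion.re_zero] at this
    linarith
  rw [norm_eq_zero.mp (pow_eq_zero_iff two_ne_zero |>.mp hv₁), zero_add]
  exact h₂

theorem inner_map_map_of_mem {a : H} (ha : a ∈ qOrth inn (kerB U)) (x : H) :
    inn (U a) (U x) = inn a x := by
  obtain ⟨x₁, h₁ : U x₁ = 0, x₂, h₂, rfl⟩ := hinn.exists_add_mem_qOrth _ U.isClosed_ker x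
  rw [coe_ker_eq_kerB] at h₂
  have hax₁ : inn a x₁ = 0 := by rw [hinn.conj_symm, ha x₁ h₁, star_zero]
  rw [map_add, h₁, zero_add, hU.inner_map_map hinn ha h₂, hinn.add_right, hax₁, zero_add]

end IsPartialIsomB

namespace ContinuousLinearMap

theorem eqOn_closure_range_of_comp_eq {U U₀ M : H →L[ℍᵐᵒᵖ] H} (h : U.comp M = U₀.comp M) :
    Set.EqOn U U₀ (closure (Set.range M)) := by
  refine Set.EqOn.closure ?_ U.continuous U₀.continuous
  rintro _ ⟨w, rfl⟩
  rw [← comp_apply, h, comp_apply]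

theorem eq_add_sub_comp_of_eqOn_kerB {U U₀ P : H →L[ℍᵐᵒᵖ] H} (hP : P.comp P = P)
    (h : Set.EqOn U U₀ (kerB P)) : U = U₀ + (U - U₀).comp P := by
  ext x
  have hx : x - P x ∈ kerB P := show P (x - P x) = 0 by
    rw [map_sub, ← comp_apply, hP, sub_self]
  have hUU₀ : U x - U (P x) = U₀ x - U₀ (P x) := by
    simpa only [map_sub] using h hx
  rw [add_apply, comp_apply, sub_apply, ← sub_add_cancel (U x) (U (P x)), hUU₀]
  abel

end ContinuousLinearMap

open ContinuousLinearMap in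
theorem polar_decomposition_general_partial_isometry_general
    [CompleteSpace H] (inn : H → H → ℍ) (hinn : QInner inn)
    (A As U₀ U modA P : H →L[ℍᵐᵒᵖ] H)
    (hadj : IsAdjB inn A As)
    (hmodpos : IsPosB inn modA) (hmodsq : modA.comp modA = As.comp A)
    (hU₀ker : kerB U₀ = kerB A)
    (hU₀fact : A = U₀.comp modA)
    (hU : IsPartialIsomB inn U) (hUfact : A = U.comp modA)
    (hPadj : IsAdjB inn P P) (hPidem : P.comp P = P)
    (hPran : Set.range P = kerB A) :
    ∃ V : H →L[ℍᵐᵒᵖ] H, IsPartialIsomB inn V ∧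
      (∀ x ∈ kerB A, V x ∈ qOrth inn (Set.range A)) ∧
      U = U₀ + V.comp P := by
  have hkerA := hinn.kerB_eq_qOrth_range_of_comp_eq hadj hmodpos.1 hmodsq
  have hagree : Set.EqOn U U₀ (closure (Set.range modA)) :=
    eqOn_closure_range_of_comp_eq (hUfact.symm.trans hU₀fact)
  have hkerP : kerB P ⊆ closure (Set.range modA) := by
    rw [← hinn.qOrth_range_eq_kerB hPadj, hPran, hkerA, ← coe_coe, ← LinearMap.coe_range]
    exact hinn.qOrth_qOrth_subset_closure _
  have hranU : Set.range modA ⊆ qOrth inn (kerB U) := by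
    rintro _ ⟨w, rfl⟩
    refine hU.mem_qOrth_kerB_of_norm_eq hinn ?_
    rw [← comp_apply, ← hUfact, hinn.norm_apply_eq_of_comp_eq hadj hmodpos.1 hmodsq]
  have hV : ∀ x ∈ kerB A, (U - U₀) x = U x := fun x hx => by
    rw [← hU₀ker] at hx
    rw [sub_apply, show U₀ x = 0 from hx, sub_zero]
  refine ⟨U - U₀, hU.of_kerB_subset (fun y hy => ?_) (fun x hx => hV x ?_), fun x hx => ?_,
    eq_add_sub_comp_of_eqOn_kerB hPidem (hagree.mono hkerP)⟩
  · have hyA : y ∈ kerB A := by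
      rw [hkerA]
      exact hinn.subset_qOrth_symm hranU hy
    exact (hV y hyA).trans hy
  · rw [hkerA]
    exact fun y hy => hx y (sub_eq_zero.mpr (hagree (subset_closure hy)))
  · rintro _ ⟨w, rfl⟩
    rw [hV x hx, hUfact, comp_apply, hU.inner_map_map_of_mem hinn (hranU ⟨w, rfl⟩)]
    rw [hkerA] at hx
    exact hx _ ⟨w, rfl⟩

/-- if `A = U₀ |A|` is the polar decomposition of the bounded operator `A`
(`N(U₀) = N(A)`), and `U` is any partial isometry with `A = U |A|`, then
`U = U₀ + V P` where `P` is the orthogonal projection onto `N(A)` and `V` is a partial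
isometry mapping `N(A)` into `R(A)^⊥`. Here `As = A*` and `modA = |A|`. -/
theorem polar_decomposition_general_partial_isometry
    [CompleteSpace H] (inn : H → H → ℍ) (hinn : QInner inn)
    (A As U₀ U modA P : H →L[ℍᵐᵒᵖ] H)
    (hadj : IsAdjB inn A As)
    (hmodpos : IsPosB inn modA) (hmodsq : modA.comp modA = As.comp A)
    (hU₀ : IsPartialIsomB inn U₀) (hU₀ker : kerB U₀ = kerB A)
    (hU₀fact : A = U₀.comp modA)
    (hU : IsPartialIsomB inn U) (hUfact : A = U.comp modA)
    (hPadj : IsAdjB inn P P) (hPidem : P.comp P = P)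
    (hPran : Set.range P = kerB A) :
    ∃ V : H →L[ℍᵐᵒᵖ] H, IsPartialIsomB inn V ∧
      (∀ x ∈ kerB A, V x ∈ qOrth inn (Set.range A)) ∧
      U = U₀ + V.comp P :=
  polar_decomposition_general_partial_isometry_general inn hinn A As U₀ U modA P hadj hmodpos hmodsq
    hU₀ker hU₀fact hU hUfact hPadj hPidem hPran
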